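/- arXiv:2409.11050 — 4 statements merged into one kernel-verified Lean document; each statement's English description precedes it below -/
import Mathlib

section
/- Let I_u, I_v be open real intervals, f : I_u → ℝ smooth with f ≠ 0, a ∈ ℝ with a² − f(u)² > 0 for all u ∈ I_u, and u₀ ∈ I_u. Let a₁, a₂, φ₁ : I_v → ℝ be smooth, φ₂, φ₃ : I_v → ℝ satisfy φ₂' = −a₁φ₁ and φ₃' = −a₂φ₁, and let α₁, α₂, α₃ : I_v → ℝ³ satisfy α₁' = a₁α₂ + a₂α₃, α₂' = −a₁α₁, α₃' = −a₂α₁ with ⟨αᵢ(v), αⱼ(v)⟩ = δᵢⱼ for all v. Set Φ₂(u,v) = ∫_{u₀}^{u} a/(f(ū)√(a² − f(ū)²)) dū + φ₂(v), ψ(u,v) = φ₁(v)α₁(v) + Φ₂(u,v)α₂(v) + φ₃(v)α₃(v), and φ(u,v) = (u, ψ(u,v)) ∈ I_u × ℝ³. Assume k(u,v) := φ₁'(v) − a₁(v)Φ₂(u,v) − a₂(v)φ₃(v) is nowhere zero. Then at every point (u,v): (i) S_uu is a scalar multiple of ∂_u φ; (ii) S_uv is a scalar multiple of ∂_v φ;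 (iii) g̃(∂_u φ, ∂_u φ) = f(u)²/(a² − f(u)²) > 0, g̃(∂_u φ, ∂_v φ) = 0, and g̃(∂_v φ, ∂_v φ) = f(u)²·k(u,v)² > 0. In particular, φ parametrizes a space-like surface in the Robertson–Walker space-time L⁴₁(f,0) whose second fundamental form vanishes on the coordinate direction ∂_u, i.e. the surface has positive relative nullity. -/
/-- The Robertson–Walker metric `g̃` of `L⁴₁(f, 0) = I ×_f ℝ³` at a point whose first
(time) coordinate is `t`: `g̃((s₁,y₁),(s₂,y₂)) = -s₁ s₂ + f(t)² ⟨y₁, y₂⟩`. -/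
noncomputable def RWmetric (f : ℝ → ℝ) (t : ℝ)
    (X Y : ℝ × EuclideanSpace ℝ (Fin 3)) : ℝ :=
  -(X.1 * Y.1) + f t ^ 2 * (inner ℝ X.2 Y.2 : ℝ)

noncomputable def gRW (f : ℝ → ℝ) (a : ℝ) : ℝ → ℝ :=
  fun x => a / (f x * Real.sqrt (a ^ 2 - f x ^ 2))

set_option maxHeartbeats 2000000

/-- Proposition 4.1 of the paper.  The explicitly parametrized surface
`φ(u,v) = (u, φ₁(v) α₁(v) + Φ₂(u,v) α₂(v) + φ₃(v) α₃(v))` with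
`Φ₂(u,v) = ∫_{u₀}^{u} a/(f √(a² - f²)) + φ₂(v)` is a space-like surface of `L⁴₁(f,0)`
with positive relative nullity: `S_uu = ∇̃_{∂u}∂u φ` is a multiple of `∂u φ`,
`S_uv = ∇̃_{∂u}∂v φ` is a multiple of `∂v φ`, and the induced metric is positive definite
with `g̃(∂u φ, ∂u φ) = f²/(a² - f²)`, `g̃(∂u φ, ∂v φ) = 0`, `g̃(∂v φ, ∂v φ) = f² k²`. -/
theorem spacelike_PRN_surface_in_L41f0 (u₁ u₂ v₁ v₂ u₀ a : ℝ)
    (hu₀ : u₀ ∈ Set.Ioo u₁ u₂)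
    (f : ℝ → ℝ) (hf : ContDiff ℝ (⊤ : ℕ∞) f) (hf0 : ∀ u ∈ Set.Ioo u₁ u₂, f u ≠ 0)
    (ha : ∀ u ∈ Set.Ioo u₁ u₂, 0 < a ^ 2 - f u ^ 2)
    (a₁ a₂ φ₁ : ℝ → ℝ)
    (ha₁ : ContDiffOn ℝ (⊤ : ℕ∞) a₁ (Set.Ioo v₁ v₂)) (ha₂ : ContDiffOn ℝ (⊤ : ℕ∞) a₂ (Set.Ioo v₁ v₂))
    (hφ₁ : ContDiffOn ℝ (⊤ : ℕ∞) φ₁ (Set.Ioo v₁ v₂))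
    (φ₂ φ₃ : ℝ → ℝ)
    (hφ₂ : ∀ v ∈ Set.Ioo v₁ v₂, HasDerivAt φ₂ (-(a₁ v * φ₁ v)) v)
    (hφ₃ : ∀ v ∈ Set.Ioo v₁ v₂, HasDerivAt φ₃ (-(a₂ v * φ₁ v)) v)
    (α₁ α₂ α₃ : ℝ → EuclideanSpace ℝ (Fin 3))
    (hα₁ : ∀ v ∈ Set.Ioo v₁ v₂, HasDerivAt α₁ (a₁ v • α₂ v + a₂ v • α₃ v) v)
    (hα₂ : ∀ v ∈ Set.Ioo v₁ v₂, HasDerivAt α₂ (-(a₁ v) • α₁ v) v)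
    (hα₃ : ∀ v ∈ Set.Ioo v₁ v₂, HasDerivAt α₃ (-(a₂ v) • α₁ v) v)
    (horth : ∀ v ∈ Set.Ioo v₁ v₂,
      (inner ℝ (α₁ v) (α₁ v) : ℝ) = 1 ∧ (inner ℝ (α₂ v) (α₂ v) : ℝ) = 1 ∧
      (inner ℝ (α₃ v) (α₃ v) : ℝ) = 1 ∧ (inner ℝ (α₁ v) (α₂ v) : ℝ) = 0 ∧
      (inner ℝ (α₁ v) (α₃ v) : ℝ) = 0 ∧ (inner ℝ (α₂ v) (α₃ v) : ℝ) = 0)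
    (Φ₂ : ℝ → ℝ → ℝ)
    (hΦ₂ : ∀ u v, Φ₂ u v
      = (∫ x in u₀..u, a / (f x * Real.sqrt (a ^ 2 - f x ^ 2))) + φ₂ v)
    (ψ : ℝ → ℝ → EuclideanSpace ℝ (Fin 3))
    (hψ : ∀ u v, ψ u v = φ₁ v • α₁ v + Φ₂ u v • α₂ v + φ₃ v • α₃ v)
    (φ : ℝ → ℝ → ℝ × EuclideanSpace ℝ (Fin 3))
    (hφ : ∀ u v, φ u v = (u, ψ u v))
    (k : ℝ → ℝ → ℝ)
    (hk : ∀ u v, k u v = deriv φ₁ v - a₁ v * Φ₂ u v - a₂ v * φ₃ v)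
    (hknz : ∀ u ∈ Set.Ioo u₁ u₂, ∀ v ∈ Set.Ioo v₁ v₂, k u v ≠ 0) :
    ∀ u ∈ Set.Ioo u₁ u₂, ∀ v ∈ Set.Ioo v₁ v₂,
      -- (i) `S_uu` is a scalar multiple of `∂u φ`
      (∃ c : ℝ,
        ((f u * deriv f u * ‖deriv (fun u' => ψ u' v) u‖ ^ 2 : ℝ),
          deriv (fun u' => deriv (fun u'' => ψ u'' v) u') u
            + (2 * deriv f u / f u) • deriv (fun u' => ψ u' v) u)
          = c • deriv (fun u' => φ u' v) u) ∧
      -- (ii) `S_uv` is a scalar multiple of `∂v φ`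
      (∃ c : ℝ,
        ((f u * deriv f u *
            (inner ℝ (deriv (fun u' => ψ u' v) u) (deriv (fun v' => ψ u v') v) : ℝ) : ℝ),
          deriv (fun v' => deriv (fun u' => ψ u' v') u) v
            + (deriv f u / f u) • deriv (fun v' => ψ u v') v)
          = c • deriv (fun v' => φ u v') v) ∧
      -- (iii) the induced metric: the surface is space-like
      RWmetric f u (deriv (fun u' => φ u' v) u) (deriv (fun u' => φ u' v) u)
        = f u ^ 2 / (a ^ 2 - f u ^ 2) ∧
      0 < f u ^ 2 / (a ^ 2 - f u ^ 2) ∧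
      RWmetric f u (deriv (fun u' => φ u' v) u) (deriv (fun v' => φ u v') v) = 0 ∧
      RWmetric f u (deriv (fun v' => φ u v') v) (deriv (fun v' => φ u v') v)
        = f u ^ 2 * k u v ^ 2 ∧
      0 < f u ^ 2 * k u v ^ 2 := by
  have hIu : IsOpen (Set.Ioo u₁ u₂) := isOpen_Ioo
  have hIv : IsOpen (Set.Ioo v₁ v₂) := isOpen_Ioo
  have hden : ∀ x ∈ Set.Ioo u₁ u₂, f x * Real.sqrt (a ^ 2 - f x ^ 2) ≠ 0 := fun x hx =>
    mul_ne_zero (hf0 x hx) (Real.sqrt_pos.mpr (ha x hx)).ne'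
  have hgcont : ContinuousOn (gRW f a) (Set.Ioo u₁ u₂) := by
    apply continuousOn_const.div
    · exact hf.continuous.continuousOn.mul
        ((continuous_const.sub (hf.continuous.pow 2)).sqrt.continuousOn)
    · exact hden
  -- Step A: u-derivative of Φ₂
  have hΦu : ∀ x ∈ Set.Ioo u₁ u₂, ∀ w, HasDerivAt (fun u' => Φ₂ u' w) (gRW f a x) x := by
    intro x hx w
    have hsub : Set.uIcc u₀ x ⊆ Set.Ioo u₁ u₂ := Set.ordConnected_Ioo.uIcc_subset hu₀ hx
    have hint : IntervalIntegrable (gRW f a) MeasureTheory.volume u₀ x :=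
      (hgcont.mono hsub).intervalIntegrable
    have hmeas : StronglyMeasurableAtFilter (gRW f a) (nhds x) MeasureTheory.volume :=
      hgcont.stronglyMeasurableAtFilter hIu x hx
    have hcont : ContinuousAt (gRW f a) x := hgcont.continuousAt (hIu.mem_nhds hx)
    have h1 : HasDerivAt (fun u' => ∫ t in u₀..u', gRW f a t) (gRW f a x) x :=
      intervalIntegral.integral_hasDerivAt_right hint hmeas hcont
    have h2 : (fun u' => Φ₂ u' w) = fun u' => (∫ t in u₀..u', gRW f a t) + φ₂ w := by
      funext u'; exact hΦ₂ u' w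
    rw [h2]; exact h1.add_const _
  -- Step B: u-derivative of ψ
  have hψu : ∀ x ∈ Set.Ioo u₁ u₂, ∀ w,
      HasDerivAt (fun u' => ψ u' w) (gRW f a x • α₂ w) x := by
    intro x hx w
    have h2 : (fun u' => ψ u' w)
        = fun u' => Φ₂ u' w • α₂ w + (φ₁ w • α₁ w + φ₃ w • α₃ w) := by
      funext u'; rw [hψ]; module
    rw [h2]
    exact ((hΦu x hx w).smul_const (α₂ w)).add_const _
  intro u hu v hv
  have hFne : f u ≠ 0 := hf0 u hu
  have haf : 0 < a ^ 2 - f u ^ 2 := ha u hu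
  have hs2 : Real.sqrt (a ^ 2 - f u ^ 2) ^ 2 = a ^ 2 - f u ^ 2 := Real.sq_sqrt haf.le
  have hsne : Real.sqrt (a ^ 2 - f u ^ 2) ≠ 0 := (Real.sqrt_pos.mpr haf).ne'
  have hkne : k u v ≠ 0 := hknz u hu v hv
  -- derivative of f
  have hfd : HasDerivAt f (deriv f u) u := (hf.differentiable (by simp) u).hasDerivAt
  -- derivative of gRW at u
  have hgd : HasDerivAt (gRW f a)
      ((0 * (f u * Real.sqrt (a ^ 2 - f u ^ 2)) -
        a * (deriv f u * Real.sqrt (a ^ 2 - f u ^ 2) +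
          f u * ((0 - (2 : ℕ) * f u ^ (2 - 1) * deriv f u) /
            (2 * Real.sqrt (a ^ 2 - f u ^ 2))))) /
        (f u * Real.sqrt (a ^ 2 - f u ^ 2)) ^ 2) u := by
    have hpow : HasDerivAt (fun x => a ^ 2 - f x ^ 2)
        (0 - (2 : ℕ) * f u ^ (2 - 1) * deriv f u) u :=
      (hasDerivAt_const u (a ^ 2)).sub (hfd.pow 2)
    exact (hasDerivAt_const u a).div (hfd.mul (hpow.sqrt haf.ne')) (hden u hu)
  -- key deriv facts
  have hA : deriv (fun u' => ψ u' v) u = gRW f a u • α₂ v := (hψu u hu v).deriv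
  have hφud : HasDerivAt (fun u' => φ u' v) (1, gRW f a u • α₂ v) u := by
    have h2 : (fun u' => φ u' v) = fun u' => (u', ψ u' v) := funext fun u' => hφ u' v
    rw [h2]; exact (hasDerivAt_id u).prodMk (hψu u hu v)
  have hB : deriv (fun u' => φ u' v) u = (1, gRW f a u • α₂ v) := hφud.deriv
  -- second u-derivative
  have h2nd : deriv (fun u' => deriv (fun u'' => ψ u'' v) u') u
      = ((0 * (f u * Real.sqrt (a ^ 2 - f u ^ 2)) -
        a * (deriv f u * Real.sqrt (a ^ 2 - f u ^ 2) +
          f u * ((0 - (2 : ℕ) * f u ^ (2 - 1) * deriv f u) /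
            (2 * Real.sqrt (a ^ 2 - f u ^ 2))))) /
        (f u * Real.sqrt (a ^ 2 - f u ^ 2)) ^ 2) • α₂ v := by
    have hED : (fun u' => deriv (fun u'' => ψ u'' v) u') =ᶠ[nhds u]
        (fun u' => gRW f a u' • α₂ v) := by
      filter_upwards [hIu.mem_nhds hu] with x hx
      exact (hψu x hx v).deriv
    rw [hED.deriv_eq]
    exact (hgd.smul_const (α₂ v)).deriv
  -- v-derivatives
  have hφ₁d : HasDerivAt φ₁ (deriv φ₁ v) v :=
    (((hφ₁.differentiableOn (by simp)) v hv).differentiableAt (hIv.mem_nhds hv)).hasDerivAt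
  have hΦ₂v : HasDerivAt (fun v' => Φ₂ u v') (-(a₁ v * φ₁ v)) v := by
    have h2 : (fun v' => Φ₂ u v')
        = fun v' => (∫ x in u₀..u, a / (f x * Real.sqrt (a ^ 2 - f x ^ 2))) + φ₂ v' := by
      funext v'; exact hΦ₂ u v'
    rw [h2]; exact (hφ₂ v hv).const_add _
  have hψvd : HasDerivAt (fun v' => ψ u v') (k u v • α₁ v) v := by
    have h1 := hφ₁d.smul (hα₁ v hv)
    have h2 := hΦ₂v.smul (hα₂ v hv)
    have h3 := (hφ₃ v hv).smul (hα₃ v hv)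
    have hsum := (h1.add h2).add h3
    have hfn : (fun v' => ψ u v')
        = fun v' => φ₁ v' • α₁ v' + Φ₂ u v' • α₂ v' + φ₃ v' • α₃ v' :=
      funext fun v' => hψ u v'
    rw [hfn]
    refine hsum.congr_deriv ?_
    rw [hk]; module
  have hC : deriv (fun v' => ψ u v') v = k u v • α₁ v := hψvd.deriv
  have hφvd : HasDerivAt (fun v' => φ u v') (0, k u v • α₁ v) v := by
    have h2 : (fun v' => φ u v') = fun v' => (u, ψ u v') := funext fun v' => hφ u v'
    rw [h2]; exact (hasDerivAt_const v u).prodMk hψvd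
  have hD : deriv (fun v' => φ u v') v = (0, k u v • α₁ v) := hφvd.deriv
  -- mixed derivative
  have hmixd : deriv (fun v' => deriv (fun u' => ψ u' v') u) v
      = gRW f a u • (-(a₁ v) • α₁ v) := by
    have hfn : (fun v' => deriv (fun u' => ψ u' v') u) = fun v' => gRW f a u • α₂ v' :=
      funext fun v' => (hψu u hu v').deriv
    rw [hfn]
    exact ((hα₂ v hv).const_smul (gRW f a u)).deriv
  -- orthonormality facts
  obtain ⟨h11, h22, h33, h12, h13, h23⟩ := horth v hv
  have hn2 : ‖α₂ v‖ = 1 := by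
    have := real_inner_self_eq_norm_sq (α₂ v)
    nlinarith [norm_nonneg (α₂ v)]
  have hguv : gRW f a u = a / (f u * Real.sqrt (a ^ 2 - f u ^ 2)) := rfl
  rw [hA, hB, hC, hD, h2nd, hmixd]
  refine ⟨⟨f u * deriv f u * gRW f a u ^ 2, ?_⟩,
    ⟨deriv f u / f u - gRW f a u * a₁ v / k u v, ?_⟩, ?_, ?_, ?_, ?_, ?_⟩
  · rw [Prod.smul_mk, Prod.mk.injEq]
    constructor
    · rw [norm_smul, hn2, smul_eq_mul, mul_one, Real.norm_eq_abs, sq_abs, mul_one]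
    · rw [smul_smul, smul_smul, ← add_smul]
      congr 1
      rw [hguv]
      field_simp
      linear_combination (2 * a * deriv f u) * hs2
  · rw [Prod.smul_mk, Prod.mk.injEq]
    constructor
    · rw [real_inner_smul_left, real_inner_smul_right, real_inner_comm (α₁ v) (α₂ v), h12]
      simp
    · rw [smul_smul, smul_smul, smul_smul, ← add_smul]
      congr 1
      field_simp
      ring
  · simp only [RWmetric, real_inner_smul_left, real_inner_smul_right, h22]
    rw [hguv]
    field_simp
    linear_combination (-(a ^ 2)) * hs2
  · exact div_pos (lt_of_le_of_ne (sq_nonneg _) (Ne.symm (pow_ne_zero 2 hFne))) haf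
  · simp only [RWmetric, real_inner_smul_left, real_inner_smul_right,
      real_inner_comm (α₁ v) (α₂ v), h12]
    ring
  · simp only [RWmetric, real_inner_smul_left, real_inner_smul_right, h11]
    ring
  · exact mul_pos (lt_of_le_of_ne (sq_nonneg _) (Ne.symm (pow_ne_zero 2 hFne)))
      (lt_of_le_of_ne (sq_nonneg _) (Ne.symm (pow_ne_zero 2 hkne)))
end

section
/- Let I_u, I_v be open real intervals, f : I_u → ℝ smooth with f ≠ 0, a ∈ ℝ with a ≠ 0, and u₀ ∈ I_u. Let a₁, a₂, φ₁ : I_v → ℝ be smooth, φ₂, φ₃ : I_v → ℝ satisfy φ₂' = −a₁φ₁ and φ₃' = −a₂φ₁, and let α₁, α₂, α₃ : I_v → ℝ³ satisfy α₁' = a₁α₂ + a₂α₃, α₂' = −a₁α₁, α₃' = −a₂α₁ with ⟨αᵢ(v), αⱼ(v)⟩ = δᵢⱼ for all v. Set Φ₂(u,v) = ∫_{u₀}^{u} a/(f(ū)√(a² + f(ū)²)) dū + φ₂(v), ψ(u,v) = φ₁(v)α₁(v) + Φ₂(u,v)α₂(v) + φ₃(v)α₃(v), and φ(u,v) = (u,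 ψ(u,v)) ∈ I_u × ℝ³. Assume k(u,v) := φ₁'(v) − a₁(v)Φ₂(u,v) − a₂(v)φ₃(v) is nowhere zero. Then at every point (u,v): (i) S_uu is a scalar multiple of ∂_u φ; (ii) S_uv is a scalar multiple of ∂_v φ; (iii) g̃(∂_u φ, ∂_u φ) = −f(u)²/(a² + f(u)²) < 0, g̃(∂_u φ, ∂_v φ) = 0, and g̃(∂_v φ, ∂_v φ) = f(u)²·k(u,v)² > 0. In particular, φ parametrizes a time-like surface in the Robertson–Walker space-time L⁴₁(f,0) whose second fundamental form vanishes on the coordinate direction ∂_u, i.e. the surface has positive relative nullity. -/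
/-- Proposition 4.3 of the paper.  The explicitly parametrized surface
`φ(u,v) = (u, φ₁(v) α₁(v) + Φ₂(u,v) α₂(v) + φ₃(v) α₃(v))` with
`Φ₂(u,v) = ∫_{u₀}^{u} a/(f √(a² + f²)) + φ₂(v)` is a time-like surface of `L⁴₁(f,0)`
with positive relative nullity: `S_uu = ∇̃_{∂u}∂u φ` is a multiple of `∂u φ`,
`S_uv = ∇̃_{∂u}∂v φ` is a multiple of `∂v φ`, and
`g̃(∂u φ, ∂u φ) = -f²/(a² + f²) < 0`, `g̃(∂u φ, ∂v φ) = 0`, `g̃(∂v φ, ∂v φ) = f² k² > 0`. -/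
theorem timelike_PRN_surface_in_L41f0 (u₁ u₂ v₁ v₂ u₀ a : ℝ)
    (hu₀ : u₀ ∈ Set.Ioo u₁ u₂)
    (f : ℝ → ℝ) (hf : ContDiff ℝ (⊤ : ℕ∞) f) (hf0 : ∀ u ∈ Set.Ioo u₁ u₂, f u ≠ 0)
    (ha : a ≠ 0)
    (a₁ a₂ φ₁ : ℝ → ℝ)
    (ha₁ : ContDiffOn ℝ (⊤ : ℕ∞) a₁ (Set.Ioo v₁ v₂)) (ha₂ : ContDiffOn ℝ (⊤ : ℕ∞) a₂ (Set.Ioo v₁ v₂))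
    (hφ₁ : ContDiffOn ℝ (⊤ : ℕ∞) φ₁ (Set.Ioo v₁ v₂))
    (φ₂ φ₃ : ℝ → ℝ)
    (hφ₂ : ∀ v ∈ Set.Ioo v₁ v₂, HasDerivAt φ₂ (-(a₁ v * φ₁ v)) v)
    (hφ₃ : ∀ v ∈ Set.Ioo v₁ v₂, HasDerivAt φ₃ (-(a₂ v * φ₁ v)) v)
    (α₁ α₂ α₃ : ℝ → EuclideanSpace ℝ (Fin 3))
    (hα₁ : ∀ v ∈ Set.Ioo v₁ v₂, HasDerivAt α₁ (a₁ v • α₂ v + a₂ v • α₃ v) v)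
    (hα₂ : ∀ v ∈ Set.Ioo v₁ v₂, HasDerivAt α₂ (-(a₁ v) • α₁ v) v)
    (hα₃ : ∀ v ∈ Set.Ioo v₁ v₂, HasDerivAt α₃ (-(a₂ v) • α₁ v) v)
    (horth : ∀ v ∈ Set.Ioo v₁ v₂,
      (inner ℝ (α₁ v) (α₁ v) : ℝ) = 1 ∧ (inner ℝ (α₂ v) (α₂ v) : ℝ) = 1 ∧
      (inner ℝ (α₃ v) (α₃ v) : ℝ) = 1 ∧ (inner ℝ (α₁ v) (α₂ v) : ℝ) = 0 ∧
      (inner ℝ (α₁ v) (α₃ v) : ℝ) = 0 ∧ (inner ℝ (α₂ v) (α₃ v) : ℝ) = 0)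
    (Φ₂ : ℝ → ℝ → ℝ)
    (hΦ₂ : ∀ u v, Φ₂ u v
      = (∫ x in u₀..u, a / (f x * Real.sqrt (a ^ 2 + f x ^ 2))) + φ₂ v)
    (ψ : ℝ → ℝ → EuclideanSpace ℝ (Fin 3))
    (hψ : ∀ u v, ψ u v = φ₁ v • α₁ v + Φ₂ u v • α₂ v + φ₃ v • α₃ v)
    (φ : ℝ → ℝ → ℝ × EuclideanSpace ℝ (Fin 3))
    (hφ : ∀ u v, φ u v = (u, ψ u v))
    (k : ℝ → ℝ → ℝ)
    (hk : ∀ u v, k u v = deriv φ₁ v - a₁ v * Φ₂ u v - a₂ v * φ₃ v)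
    (hknz : ∀ u ∈ Set.Ioo u₁ u₂, ∀ v ∈ Set.Ioo v₁ v₂, k u v ≠ 0) :
    ∀ u ∈ Set.Ioo u₁ u₂, ∀ v ∈ Set.Ioo v₁ v₂,
      -- (i) `S_uu` is a scalar multiple of `∂u φ`
      (∃ c : ℝ,
        ((f u * deriv f u * ‖deriv (fun u' => ψ u' v) u‖ ^ 2 : ℝ),
          deriv (fun u' => deriv (fun u'' => ψ u'' v) u') u
            + (2 * deriv f u / f u) • deriv (fun u' => ψ u' v) u)
          = c • deriv (fun u' => φ u' v) u) ∧
      -- (ii) `S_uv` is a scalar multiple of `∂v φ`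
      (∃ c : ℝ,
        ((f u * deriv f u *
            (inner ℝ (deriv (fun u' => ψ u' v) u) (deriv (fun v' => ψ u v') v) : ℝ) : ℝ),
          deriv (fun v' => deriv (fun u' => ψ u' v') u) v
            + (deriv f u / f u) • deriv (fun v' => ψ u v') v)
          = c • deriv (fun v' => φ u v') v) ∧
      -- (iii) the induced metric: the surface is time-like
      RWmetric f u (deriv (fun u' => φ u' v) u) (deriv (fun u' => φ u' v) u)
        = -(f u ^ 2 / (a ^ 2 + f u ^ 2)) ∧
      -(f u ^ 2 / (a ^ 2 + f u ^ 2)) < 0 ∧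
      RWmetric f u (deriv (fun u' => φ u' v) u) (deriv (fun v' => φ u v') v) = 0 ∧
      RWmetric f u (deriv (fun v' => φ u v') v) (deriv (fun v' => φ u v') v)
        = f u ^ 2 * k u v ^ 2 ∧
      0 < f u ^ 2 * k u v ^ 2 := by
  intro u hu v hv
  have hfu : f u ≠ 0 := hf0 u hu
  have hsq_pos : ∀ x : ℝ, (0:ℝ) < a ^ 2 + f x ^ 2 := fun x => by positivity
  have hs_pos : ∀ x : ℝ, (0:ℝ) < Real.sqrt (a ^ 2 + f x ^ 2) :=
    fun x => Real.sqrt_pos.mpr (hsq_pos x)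
  set G : ℝ → ℝ := fun x => a / (f x * Real.sqrt (a ^ 2 + f x ^ 2)) with hGdef
  set F : ℝ → ℝ := fun x => ∫ t in u₀..x, a / (f t * Real.sqrt (a ^ 2 + f t ^ 2)) with hFdef
  have hfd : ∀ x : ℝ, HasDerivAt f (deriv f x) x :=
    fun x => (hf.differentiable (by simp) x).hasDerivAt
  -- continuity of the integrand
  have hGcont : ContinuousOn G (Set.Ioo u₁ u₂) := by
    apply ContinuousOn.div continuousOn_const
    · exact (hf.continuous.mul (continuous_const.add (hf.continuous.pow 2)).sqrt).continuousOn
    · intro x hx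
      exact mul_ne_zero (hf0 x hx) (hs_pos x).ne'
  -- derivative of the primitive F
  have hF : ∀ x ∈ Set.Ioo u₁ u₂, HasDerivAt F (G x) x := by
    intro x hx
    apply intervalIntegral.integral_hasDerivAt_right
    · exact (hGcont.mono (Set.ordConnected_Ioo.uIcc_subset hu₀ hx)).intervalIntegrable
    · exact hGcont.stronglyMeasurableAtFilter isOpen_Ioo x hx
    · exact hGcont.continuousAt (isOpen_Ioo.mem_nhds hx)
  -- derivative of G
  have hG : ∀ x ∈ Set.Ioo u₁ u₂, HasDerivAt G
      (-(a * deriv f x * (a ^ 2 + 2 * f x ^ 2)) /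
        (f x ^ 2 * (a ^ 2 + f x ^ 2) * Real.sqrt (a ^ 2 + f x ^ 2))) x := by
    intro x hx
    have hfx : f x ≠ 0 := hf0 x hx
    have hsx : Real.sqrt (a ^ 2 + f x ^ 2) ≠ 0 := (hs_pos x).ne'
    have h1 : HasDerivAt (fun y => a ^ 2 + f y ^ 2) (2 * f x * deriv f x) x := by
      have := (hasDerivAt_const x (a ^ 2)).add ((hfd x).pow 2)
      refine this.congr_deriv ?_
      norm_num
    have h2 := h1.sqrt (hsq_pos x).ne'
    have h3 := (hfd x).mul h2
    have h4 := (hasDerivAt_const x a).div h3 (mul_ne_zero hfx hsx)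
    refine h4.congr_deriv ?_
    symm
    have hs2 : Real.sqrt (a ^ 2 + f x ^ 2) ^ 2 = a ^ 2 + f x ^ 2 :=
      Real.sq_sqrt (hsq_pos x).le
    simp only [Pi.mul_apply]
    field_simp
    linear_combination (-a * deriv f x * f x ^ 2) * hs2
  -- u-derivative of ψ
  have hψu : ∀ x ∈ Set.Ioo u₁ u₂, ∀ w : ℝ,
      HasDerivAt (fun u' => ψ u' w) (G x • α₂ w) x := by
    intro x hx w
    have hfun : (fun u' => ψ u' w)
        = fun u' => (φ₁ w • α₁ w + φ₃ w • α₃ w) + (F u' + φ₂ w) • α₂ w := by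
      funext u'
      rw [hψ, hΦ₂, hFdef]
      module
    rw [hfun]
    have := (((hF x hx).add_const (φ₂ w)).smul_const (α₂ w)).const_add
      (φ₁ w • α₁ w + φ₃ w • α₃ w)
    simpa using this
  -- v-derivative of Φ₂
  have hΦ₂v : ∀ x : ℝ, HasDerivAt (fun v' => Φ₂ x v') (-(a₁ v * φ₁ v)) v := by
    intro x
    have hfun : (fun v' => Φ₂ x v') = fun v' => F x + φ₂ v' := by
      funext v'; rw [hΦ₂, hFdef]
    rw [hfun]
    exact (hφ₂ v hv).const_add (F x)
  have hφ₁d : HasDerivAt φ₁ (deriv φ₁ v) v :=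
    (((hφ₁.differentiableOn (by simp)).differentiableAt (isOpen_Ioo.mem_nhds hv))).hasDerivAt
  -- v-derivative of ψ
  have hψv : HasDerivAt (fun v' => ψ u v') (k u v • α₁ v) v := by
    have h := ((hφ₁d.smul (hα₁ v hv)).add ((hΦ₂v u).smul (hα₂ v hv))).add
      ((hφ₃ v hv).smul (hα₃ v hv))
    have hfun : (fun v' => ψ u v')
        = fun v' => (φ₁ v' • α₁ v' + Φ₂ u v' • α₂ v') + φ₃ v' • α₃ v' := by
      funext v'; rw [hψ]
    rw [hfun]
    refine h.congr_deriv ?_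
    rw [hk]
    module
  -- the various `deriv` rewrites
  have hdψu : deriv (fun u' => ψ u' v) u = G u • α₂ v := (hψu u hu v).deriv
  have hdψv : deriv (fun v' => ψ u v') v = k u v • α₁ v := hψv.deriv
  have hd2 : deriv (fun u' => deriv (fun u'' => ψ u'' v) u') u
      = (-(a * deriv f u * (a ^ 2 + 2 * f u ^ 2)) /
        (f u ^ 2 * (a ^ 2 + f u ^ 2) * Real.sqrt (a ^ 2 + f u ^ 2))) • α₂ v := by
    have hev : (fun u' => deriv (fun u'' => ψ u'' v) u') =ᶠ[nhds u]
        fun u' => G u' • α₂ v :=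
      Filter.eventuallyEq_of_mem (isOpen_Ioo.mem_nhds hu)
        (fun x hx => (hψu x hx v).deriv)
    rw [hev.deriv_eq, ((hG u hu).smul_const (α₂ v)).deriv]
  have hmix : deriv (fun v' => deriv (fun u' => ψ u' v') u) v
      = G u • ((-(a₁ v)) • α₁ v) := by
    have hfun : (fun v' => deriv (fun u' => ψ u' v') u) = fun v' => G u • α₂ v' := by
      funext w; exact (hψu u hu w).deriv
    rw [hfun]; exact ((hα₂ v hv).const_smul (G u)).deriv
  have hdφu : deriv (fun u' => φ u' v) u = ((1 : ℝ), G u • α₂ v) := by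
    have hfun : (fun u' => φ u' v) = fun u' => (u', ψ u' v) := by
      funext x; rw [hφ]
    rw [hfun]
    exact ((hasDerivAt_id u).prodMk (hψu u hu v)).deriv
  have hdφv : deriv (fun v' => φ u v') v = ((0 : ℝ), k u v • α₁ v) := by
    have hfun : (fun v' => φ u v') = fun v' => (u, ψ u v') := by
      funext x; rw [hφ]
    rw [hfun]
    exact ((hasDerivAt_const v u).prodMk hψv).deriv
  -- auxiliary facts
  obtain ⟨h11, h22, h33, h12, h13, h23⟩ := horth v hv
  have hs2 : Real.sqrt (a ^ 2 + f u ^ 2) ^ 2 = a ^ 2 + f u ^ 2 :=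
    Real.sq_sqrt (hsq_pos u).le
  have hsu : Real.sqrt (a ^ 2 + f u ^ 2) ≠ 0 := (hs_pos u).ne'
  have hknz' : k u v ≠ 0 := hknz u hu v hv
  have hα₂norm : ‖α₂ v‖ ^ 2 = 1 := by rw [← real_inner_self_eq_norm_sq]; exact h22
  rw [hdψu, hdψv, hd2, hmix, hdφu, hdφv]
  refine ⟨⟨f u * deriv f u * (G u) ^ 2, ?_⟩,
    ⟨deriv f u / f u - (G u * a₁ v) / k u v, ?_⟩, ?_, ?_, ?_, ?_, ?_⟩
  · -- (i)
    rw [Prod.smul_mk, Prod.mk.injEq]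
    constructor
    · rw [norm_smul, mul_pow, Real.norm_eq_abs, sq_abs, hα₂norm, smul_eq_mul]
      ring
    · rw [smul_smul, smul_smul, ← add_smul]
      congr 1
      rw [hGdef]
      simp only
      field_simp
      linear_combination (a ^ 2 * deriv f u) * hs2
  · -- (ii)
    rw [Prod.smul_mk, Prod.mk.injEq]
    constructor
    · rw [real_inner_smul_left, real_inner_smul_right, real_inner_comm, h12,
        smul_eq_mul]
      ring
    · rw [smul_smul, smul_smul, ← add_smul, smul_smul]
      congr 1
      field_simp
      ring
  · -- metric uu
    have key : f u ^ 2 * (G u * (G u * 1)) = a ^ 2 / (a ^ 2 + f u ^ 2) := by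
      have hG2 : G u ^ 2 = a ^ 2 / (f u ^ 2 * (a ^ 2 + f u ^ 2)) := by
        rw [hGdef]; simp only; rw [div_pow, mul_pow, hs2]
      rw [mul_one, ← pow_two, hG2]
      field_simp
    simp only [RWmetric, real_inner_smul_left, real_inner_smul_right, h22]
    rw [key]
    field_simp
    ring
  · -- negativity
    have h1 : 0 < f u ^ 2 := pow_two_pos_of_ne_zero hfu
    have h2 : 0 < f u ^ 2 / (a ^ 2 + f u ^ 2) := div_pos h1 (hsq_pos u)
    linarith
  · -- metric uv
    have h21 : (inner ℝ (α₂ v) (α₁ v) : ℝ) = 0 := by rw [real_inner_comm]; exact h12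
    simp only [RWmetric, real_inner_smul_left, real_inner_smul_right, h21]
    ring
  · -- metric vv
    simp only [RWmetric, real_inner_smul_left, real_inner_smul_right, h11]
    ring
  · -- positivity
    have h1 : 0 < f u ^ 2 := pow_two_pos_of_ne_zero hfu
    have h2 : 0 < k u v ^ 2 := pow_two_pos_of_ne_zero hknz'
    exact mul_pos h1 h2
end

section
/- Let I be an open real interval, θ₀ ≠ 0 a real constant, a₁, a₂, a₃ : I → ℝ smooth functions, and let α₁, α₂, α₃, α₄ : I → ℝ⁴ satisfy α₁' = a₁α₃, α₂' = a₂α₃, α₃' = a₁α₁ − a₂α₂ + a₃α₄, α₄' = −a₃α₃ on I, with B(α₁(v),α₁(v)) = −1, B(αᵢ(v),αᵢ(v)) = 1 for i = 2,3,4, and B(αᵢ(v),αⱼ(v)) = 0 for i ≠ j, for all v ∈ I. Define ψ(u,v) = cosh(u·cosh θ₀)·α₁(v) + sinh(u·cosh θ₀)·α₂(v) and φ(u,v) = (u·sinh θ₀, ψ(u,v)) ∈ ℝ × ℝ⁴. Then for all (u,v) ∈ ℝ × I: (i) B(ψ(u,v), ψ(u,v)) = −1, so φ takes values in 𝔼¹₁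 × ℍ³; (ii) ∂_u²φ = cosh²θ₀ · (0, ψ(u,v)), which is normal to 𝔼¹₁ × ℍ³ inside ℝ × ℝ⁴ at φ(u,v); (iii) ∂_u∂_v φ and ∂_v φ are both scalar multiples of (0, α₃(v)); (iv) g(∂_u φ, ∂_u φ) = 1 and g(∂_u φ, ∂_v φ) = 0. In particular φ parametrizes a space-like surface in 𝔼¹₁ × ℍ³ whose second fundamental form vanishes on the coordinate direction ∂_u, i.e. the surface has positive relative nullity. -/
/-- The Minkowski bilinear form on `ℝ⁴`:
`B(x, y) = -x₁ y₁ + x₂ y₂ + x₃ y₃ + x₄ y₄`, making `ℝ⁴` the Minkowski space `𝔼⁴₁`. -/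
noncomputable def minkB (x y : EuclideanSpace ℝ (Fin 4)) : ℝ :=
  -(x 0 * y 0) + x 1 * y 1 + x 2 * y 2 + x 3 * y 3

/-- The pseudo-Riemannian product metric of `𝔼¹₁ × 𝔼⁴₁ = ℝ × ℝ⁴`:
`g((s₁,y₁),(s₂,y₂)) = -s₁ s₂ + B(y₁, y₂)`. -/
noncomputable def prodMetric (X Y : ℝ × EuclideanSpace ℝ (Fin 4)) : ℝ :=
  -(X.1 * Y.1) + minkB X.2 Y.2

lemma minkB_expand (a b a' b' : ℝ) (x y z w : EuclideanSpace ℝ (Fin 4)) :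
    minkB (a • x + b • y) (a' • z + b' • w)
      = a * a' * minkB x z + a * b' * minkB x w + b * a' * minkB y z + b * b' * minkB y w := by
  simp [minkB, PiLp.add_apply, PiLp.smul_apply, smul_eq_mul]
  ring

lemma minkB_comm (x y : EuclideanSpace ℝ (Fin 4)) : minkB x y = minkB y x := by
  simp [minkB]; ring

/-- Proposition 5.3 of the paper.  With a pseudo-orthonormal moving
frame `{α₁, α₂, α₃, α₄}` in `𝔼⁴₁` solving the displayed system, the surface
`φ(u,v) = (u sinh θ₀, cosh(u cosh θ₀) α₁(v) + sinh(u cosh θ₀) α₂(v))` is a space-like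
surface in `𝔼¹₁ × ℍ³` with positive relative nullity: `B(ψ, ψ) = -1`, `∂u²φ` is
normal to `𝔼¹₁ × ℍ³` (a multiple of `(0, ψ)`), `∂u∂vφ` and `∂vφ` are multiples of
`(0, α₃)`, and `g(∂uφ, ∂uφ) = 1`, `g(∂uφ, ∂vφ) = 0`. -/
theorem spacelike_PRN_surface_in_E11H3 (A B θ₀ : ℝ) (hθ₀ : θ₀ ≠ 0)
    (a₁ a₂ a₃ : ℝ → ℝ)
    (ha₁ : ContDiffOn ℝ (⊤ : ℕ∞) a₁ (Set.Ioo A B)) (ha₂ : ContDiffOn ℝ (⊤ : ℕ∞) a₂ (Set.Ioo A B))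
    (ha₃ : ContDiffOn ℝ (⊤ : ℕ∞) a₃ (Set.Ioo A B))
    (α₁ α₂ α₃ α₄ : ℝ → EuclideanSpace ℝ (Fin 4))
    (hα₁ : ∀ v ∈ Set.Ioo A B, HasDerivAt α₁ (a₁ v • α₃ v) v)
    (hα₂ : ∀ v ∈ Set.Ioo A B, HasDerivAt α₂ (a₂ v • α₃ v) v)
    (hα₃ : ∀ v ∈ Set.Ioo A B,
      HasDerivAt α₃ (a₁ v • α₁ v + -(a₂ v) • α₂ v + a₃ v • α₄ v) v)
    (hα₄ : ∀ v ∈ Set.Ioo A B, HasDerivAt α₄ (-(a₃ v) • α₃ v) v)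
    (horth : ∀ v ∈ Set.Ioo A B,
      minkB (α₁ v) (α₁ v) = -1 ∧ minkB (α₂ v) (α₂ v) = 1 ∧
      minkB (α₃ v) (α₃ v) = 1 ∧ minkB (α₄ v) (α₄ v) = 1 ∧
      minkB (α₁ v) (α₂ v) = 0 ∧ minkB (α₁ v) (α₃ v) = 0 ∧
      minkB (α₁ v) (α₄ v) = 0 ∧ minkB (α₂ v) (α₃ v) = 0 ∧
      minkB (α₂ v) (α₄ v) = 0 ∧ minkB (α₃ v) (α₄ v) = 0)
    (ψ : ℝ → ℝ → EuclideanSpace ℝ (Fin 4))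
    (hψ : ∀ u v, ψ u v
      = Real.cosh (u * Real.cosh θ₀) • α₁ v + Real.sinh (u * Real.cosh θ₀) • α₂ v)
    (φ : ℝ → ℝ → ℝ × EuclideanSpace ℝ (Fin 4))
    (hφ : ∀ u v, φ u v = (u * Real.sinh θ₀, ψ u v)) :
    ∀ u : ℝ, ∀ v ∈ Set.Ioo A B,
      -- (i) `φ` takes values in `𝔼¹₁ × ℍ³`
      minkB (ψ u v) (ψ u v) = -1 ∧
      -- (ii) `∂u²φ` is normal to `𝔼¹₁ × ℍ³`
      deriv (fun u' => deriv (fun u'' => φ u'' v) u') u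
        = (Real.cosh θ₀ ^ 2) • ((0 : ℝ), ψ u v) ∧
      -- (iii) `∂u∂vφ` and `∂vφ` are multiples of `(0, α₃)`
      (∃ c : ℝ, deriv (fun u' => deriv (fun v' => φ u' v') v) u
        = c • ((0 : ℝ), α₃ v)) ∧
      (∃ c : ℝ, deriv (fun v' => φ u v') v = c • ((0 : ℝ), α₃ v)) ∧
      -- (iv) the surface is space-like
      prodMetric (deriv (fun u' => φ u' v) u) (deriv (fun u' => φ u' v) u) = 1 ∧
      prodMetric (deriv (fun u' => φ u' v) u) (deriv (fun v' => φ u v') v) = 0 := by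
  intro u v hv
  set c := Real.cosh θ₀ with hc
  set s := Real.sinh θ₀ with hs
  obtain ⟨h11, h22, h33, h44, h12, h13, h14, h23, h24, h34⟩ := horth v hv
  have h21 : minkB (α₂ v) (α₁ v) = 0 := by rw [minkB_comm]; exact h12
  have h31 : minkB (α₃ v) (α₁ v) = 0 := by rw [minkB_comm]; exact h13
  have h32 : minkB (α₃ v) (α₂ v) = 0 := by rw [minkB_comm]; exact h23
  have hpyth : ∀ t : ℝ, Real.cosh t ^ 2 - Real.sinh t ^ 2 = 1 :=
    fun t => Real.cosh_sq_sub_sinh_sq t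
  -- derivative in u of φ (· , v)
  have hfc : ∀ u' : ℝ, HasDerivAt (fun x : ℝ => Real.cosh (x * c))
      (Real.sinh (u' * c) * c) u' := fun u' =>
    by have h := (Real.hasDerivAt_cosh (u' * c)).comp u' (hasDerivAt_mul_const c); exact h
  have hfs : ∀ u' : ℝ, HasDerivAt (fun x : ℝ => Real.sinh (x * c))
      (Real.cosh (u' * c) * c) u' := fun u' =>
    by have h := (Real.hasDerivAt_sinh (u' * c)).comp u' (hasDerivAt_mul_const c); exact h
  have Du : ∀ u' : ℝ, HasDerivAt (fun u'' => φ u'' v)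
      (s, (Real.sinh (u' * c) * c) • α₁ v + (Real.cosh (u' * c) * c) • α₂ v) u' := by
    intro u'
    have h1 : HasDerivAt (fun x : ℝ => x * s) s u' := hasDerivAt_mul_const s
    have h2 := ((hfc u').smul_const (α₁ v)).add ((hfs u').smul_const (α₂ v))
    have := h1.prodMk h2
    simpa only [hφ, hψ, Pi.add_apply, Pi.smul_apply] using this
  have hDueq : (fun u' => deriv (fun u'' => φ u'' v) u')
      = fun u' => ((s, (Real.sinh (u' * c) * c) • α₁ v + (Real.cosh (u' * c) * c) • α₂ v)
        : ℝ × EuclideanSpace ℝ (Fin 4)) :=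
    funext fun u' => (Du u').deriv
  -- derivative in v of φ (u', ·) at v
  have Dv : ∀ u' : ℝ, HasDerivAt (fun v' => φ u' v')
      ((0 : ℝ), Real.cosh (u' * c) • (a₁ v • α₃ v) + Real.sinh (u' * c) • (a₂ v • α₃ v)) v := by
    intro u'
    have h1 : HasDerivAt (fun _ : ℝ => u' * s) 0 v := hasDerivAt_const v _
    have h2 := ((hα₁ v hv).const_smul (Real.cosh (u' * c))).add
      ((hα₂ v hv).const_smul (Real.sinh (u' * c)))
    have := h1.prodMk h2
    simpa only [hφ, hψ, Pi.add_apply, Pi.smul_apply] using this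
  refine ⟨?_, ?_, ?_, ?_, ?_, ?_⟩
  · -- (i)
    rw [hψ, minkB_expand, h11, h22, h12, h21]
    nlinarith [hpyth (u * c)]
  · -- (ii)
    rw [hDueq]
    have h2 : HasDerivAt (fun u' : ℝ =>
        ((s, (Real.sinh (u' * c) * c) • α₁ v + (Real.cosh (u' * c) * c) • α₂ v)
          : ℝ × EuclideanSpace ℝ (Fin 4)))
        ((0 : ℝ), (Real.cosh (u * c) * c * c) • α₁ v + (Real.sinh (u * c) * c * c) • α₂ v) u := by
      exact (hasDerivAt_const u s).prodMk
        ((((hfs u).mul_const c).smul_const (α₁ v)).add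
          (((hfc u).mul_const c).smul_const (α₂ v)))
    rw [h2.deriv, hψ, Prod.ext_iff]
    refine ⟨by simp, ?_⟩
    simp only [Prod.smul_snd]
    module
  · -- (iii) ∂u∂v
    have hDveq : (fun u' => deriv (fun v' => φ u' v') v)
        = fun u' => (((0 : ℝ), Real.cosh (u' * c) • (a₁ v • α₃ v)
            + Real.sinh (u' * c) • (a₂ v • α₃ v)) : ℝ × EuclideanSpace ℝ (Fin 4)) :=
      funext fun u' => (Dv u').deriv
    rw [hDveq]
    have h2 : HasDerivAt (fun u' : ℝ =>
        (((0 : ℝ), Real.cosh (u' * c) • (a₁ v • α₃ v) + Real.sinh (u' * c) • (a₂ v • α₃ v))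
          : ℝ × EuclideanSpace ℝ (Fin 4)))
        ((0 : ℝ), (Real.sinh (u * c) * c) • (a₁ v • α₃ v)
          + (Real.cosh (u * c) * c) • (a₂ v • α₃ v)) u :=
      (hasDerivAt_const u (0 : ℝ)).prodMk
        (((hfc u).smul_const (a₁ v • α₃ v)).add ((hfs u).smul_const (a₂ v • α₃ v)))
    refine ⟨Real.sinh (u * c) * c * a₁ v + Real.cosh (u * c) * c * a₂ v, ?_⟩
    rw [h2.deriv, Prod.ext_iff]
    refine ⟨by simp, ?_⟩
    simp only [Prod.smul_snd]
    module
  · -- (iii) ∂v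
    refine ⟨Real.cosh (u * c) * a₁ v + Real.sinh (u * c) * a₂ v, ?_⟩
    rw [(Dv u).deriv, Prod.ext_iff]
    refine ⟨by simp, ?_⟩
    simp only [Prod.smul_snd]
    module
  · -- (iv) g(∂u,∂u)=1
    rw [(Du u).deriv]
    simp only [prodMetric]
    rw [minkB_expand, h11, h22, h12, h21]
    nlinarith [hpyth (u * c), hpyth θ₀]
  · -- (iv) g(∂u,∂v)=0
    rw [(Du u).deriv, (Dv u).deriv]
    simp only [prodMetric]
    have e1 : Real.cosh (u * c) • (a₁ v • α₃ v) = (Real.cosh (u * c) * a₁ v) • α₃ v := by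
      rw [smul_smul]
    have e2 : Real.sinh (u * c) • (a₂ v • α₃ v) = (Real.sinh (u * c) * a₂ v) • α₃ v := by
      rw [smul_smul]
    rw [e1, e2, minkB_expand, h13, h23]
    ring
end

section
/- Let I be an open real interval, θ₀ ≠ 0 a real constant, a₁, a₂, a₃ : I → ℝ smooth functions, and let α₁, α₂, α₃, α₄ : I → ℝ⁴ satisfy α₁' = a₁α₃, α₂' = a₂α₃, α₃' = a₁α₁ − a₂α₂ + a₃α₄, α₄' = −a₃α₃ on I, with B(α₁(v),α₁(v)) = −1, B(αᵢ(v),αᵢ(v)) = 1 for i = 2,3,4, and B(αᵢ(v),αⱼ(v)) = 0 for i ≠ j, for all v ∈ I. Define ψ(u,v) = cosh(u·sinh θ₀)·α₁(v) + sinh(u·sinh θ₀)·α₂(v) and φ(u,v) = (u·cosh θ₀, ψ(u,v)) ∈ ℝ × ℝ⁴. Then for all (u,v) ∈ ℝ × I: (i) B(ψ(u,v), ψ(u,v)) = −1, so φ takes values in 𝔼¹₁ × ℍ³; (ii) ∂_u²φ = sinh²θ₀ · (0, ψ(u,v)), which is normal to 𝔼¹₁ × ℍ³ inside ℝ × ℝ⁴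 at φ(u,v); (iii) ∂_u∂_v φ and ∂_v φ are both scalar multiples of (0, α₃(v)); (iv) g(∂_u φ, ∂_u φ) = −1 and g(∂_u φ, ∂_v φ) = 0. In particular φ parametrizes a time-like surface in 𝔼¹₁ × ℍ³ whose second fundamental form vanishes on the coordinate direction ∂_u, i.e. the surface has positive relative nullity. -/
lemma minkB_ex2 (a b c d : ℝ) (x y z w : EuclideanSpace ℝ (Fin 4)) :
    minkB (a • x + b • y) (c • z + d • w)
      = a*c*minkB x z + a*d*minkB x w + b*c*minkB y z + b*d*minkB y w := by
  simp only [minkB, PiLp.add_apply, PiLp.smul_apply, smul_eq_mul]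
  ring

lemma minkB_ex1 (a b c : ℝ) (x y z : EuclideanSpace ℝ (Fin 4)) :
    minkB (a • x + b • y) (c • z) = a*c*minkB x z + b*c*minkB y z := by
  simp only [minkB, PiLp.smul_apply, PiLp.add_apply, smul_eq_mul]
  ring

/-- Proposition 5.4 of the paper.  With a pseudo-orthonormal moving
frame `{α₁, α₂, α₃, α₄}` in `𝔼⁴₁` solving the displayed system, the surface
`φ(u,v) = (u cosh θ₀, cosh(u sinh θ₀) α₁(v) + sinh(u sinh θ₀) α₂(v))` is a time-like
surface in `𝔼¹₁ × ℍ³` with positive relative nullity: `B(ψ, ψ) = -1`, `∂u²φ` is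
normal to `𝔼¹₁ × ℍ³` (a multiple of `(0, ψ)`), `∂u∂vφ` and `∂vφ` are multiples of
`(0, α₃)`, and `g(∂uφ, ∂uφ) = -1`, `g(∂uφ, ∂vφ) = 0`. -/
theorem timelike_PRN_surface_in_E11H3 (A B θ₀ : ℝ) (hθ₀ : θ₀ ≠ 0)
    (a₁ a₂ a₃ : ℝ → ℝ)
    (ha₁ : ContDiffOn ℝ (⊤ : ℕ∞) a₁ (Set.Ioo A B)) (ha₂ : ContDiffOn ℝ (⊤ : ℕ∞) a₂ (Set.Ioo A B))
    (ha₃ : ContDiffOn ℝ (⊤ : ℕ∞) a₃ (Set.Ioo A B))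
    (α₁ α₂ α₃ α₄ : ℝ → EuclideanSpace ℝ (Fin 4))
    (hα₁ : ∀ v ∈ Set.Ioo A B, HasDerivAt α₁ (a₁ v • α₃ v) v)
    (hα₂ : ∀ v ∈ Set.Ioo A B, HasDerivAt α₂ (a₂ v • α₃ v) v)
    (hα₃ : ∀ v ∈ Set.Ioo A B,
      HasDerivAt α₃ (a₁ v • α₁ v + -(a₂ v) • α₂ v + a₃ v • α₄ v) v)
    (hα₄ : ∀ v ∈ Set.Ioo A B, HasDerivAt α₄ (-(a₃ v) • α₃ v) v)
    (horth : ∀ v ∈ Set.Ioo A B,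
      minkB (α₁ v) (α₁ v) = -1 ∧ minkB (α₂ v) (α₂ v) = 1 ∧
      minkB (α₃ v) (α₃ v) = 1 ∧ minkB (α₄ v) (α₄ v) = 1 ∧
      minkB (α₁ v) (α₂ v) = 0 ∧ minkB (α₁ v) (α₃ v) = 0 ∧
      minkB (α₁ v) (α₄ v) = 0 ∧ minkB (α₂ v) (α₃ v) = 0 ∧
      minkB (α₂ v) (α₄ v) = 0 ∧ minkB (α₃ v) (α₄ v) = 0)
    (ψ : ℝ → ℝ → EuclideanSpace ℝ (Fin 4))
    (hψ : ∀ u v, ψ u v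
      = Real.cosh (u * Real.sinh θ₀) • α₁ v + Real.sinh (u * Real.sinh θ₀) • α₂ v)
    (φ : ℝ → ℝ → ℝ × EuclideanSpace ℝ (Fin 4))
    (hφ : ∀ u v, φ u v = (u * Real.cosh θ₀, ψ u v)) :
    ∀ u : ℝ, ∀ v ∈ Set.Ioo A B,
      -- (i) `φ` takes values in `𝔼¹₁ × ℍ³`
      minkB (ψ u v) (ψ u v) = -1 ∧
      -- (ii) `∂u²φ` is normal to `𝔼¹₁ × ℍ³`
      deriv (fun u' => deriv (fun u'' => φ u'' v) u') u
        = (Real.sinh θ₀ ^ 2) • ((0 : ℝ), ψ u v) ∧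
      -- (iii) `∂u∂vφ` and `∂vφ` are multiples of `(0, α₃)`
      (∃ c : ℝ, deriv (fun u' => deriv (fun v' => φ u' v') v) u
        = c • ((0 : ℝ), α₃ v)) ∧
      (∃ c : ℝ, deriv (fun v' => φ u v') v = c • ((0 : ℝ), α₃ v)) ∧
      -- (iv) the surface is time-like
      prodMetric (deriv (fun u' => φ u' v) u) (deriv (fun u' => φ u' v) u) = -1 ∧
      prodMetric (deriv (fun u' => φ u' v) u) (deriv (fun v' => φ u v') v) = 0 :=
  by
  intro u v hv
  set s := Real.sinh θ₀ with hs
  set c0 := Real.cosh θ₀ with hc0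
  obtain ⟨h11, h22, h33, h44, h12, h13, h14, h23, h24, h34⟩ := horth v hv
  have hpyth : ∀ x : ℝ, Real.cosh x ^ 2 - Real.sinh x ^ 2 = 1 :=
    fun x => Real.cosh_sq_sub_sinh_sq x
  -- derivatives of cosh(u' * s), sinh(u' * s)
  have hco : ∀ u' : ℝ, HasDerivAt (fun t => Real.cosh (t * s))
      (s * Real.sinh (u' * s)) u' := by
    intro u'
    have := (Real.hasDerivAt_cosh (u' * s)).comp u' ((hasDerivAt_id u').mul_const s)
    simpa [mul_comm, Function.comp_def] using this
  have hsi : ∀ u' : ℝ, HasDerivAt (fun t => Real.sinh (t * s))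
      (s * Real.cosh (u' * s)) u' := by
    intro u'
    have := (Real.hasDerivAt_sinh (u' * s)).comp u' ((hasDerivAt_id u').mul_const s)
    simpa [mul_comm, Function.comp_def] using this
  -- ∂u ψ
  have hψu : ∀ u' : ℝ, HasDerivAt (fun t => ψ t v)
      ((s * Real.sinh (u' * s)) • α₁ v + (s * Real.cosh (u' * s)) • α₂ v) u' := by
    intro u'
    have hfun : (fun t => ψ t v)
        = fun t => Real.cosh (t * s) • α₁ v + Real.sinh (t * s) • α₂ v :=
      funext fun t => hψ t v
    rw [hfun]
    exact ((hco u').smul_const (α₁ v)).add ((hsi u').smul_const (α₂ v))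
  -- ∂u φ
  have hφu : ∀ u' : ℝ, HasDerivAt (fun t => φ t v)
      (c0, (s * Real.sinh (u' * s)) • α₁ v + (s * Real.cosh (u' * s)) • α₂ v) u' := by
    intro u'
    have hfun : (fun t => φ t v) = fun t => (t * c0, ψ t v) :=
      funext fun t => hφ t v
    rw [hfun]
    exact (by simpa using (hasDerivAt_id u').mul_const c0 : HasDerivAt (fun t => t * c0) c0 u').prodMk (hψu u')
  have hdφu : deriv (fun u' => φ u' v) u
      = (c0, (s * Real.sinh (u * s)) • α₁ v + (s * Real.cosh (u * s)) • α₂ v) :=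
    (hφu u).deriv
  -- ∂v φ at any u'
  have hφv : ∀ u' : ℝ, HasDerivAt (fun v' => φ u' v')
      ((0 : ℝ), (Real.cosh (u' * s) * a₁ v + Real.sinh (u' * s) * a₂ v) • α₃ v) v := by
    intro u'
    have hfun : (fun v' => φ u' v')
        = fun v' => (u' * c0, Real.cosh (u' * s) • α₁ v' + Real.sinh (u' * s) • α₂ v') :=
      funext fun v' => by rw [hφ, hψ]
    rw [hfun]
    refine (hasDerivAt_const v (u' * c0)).prodMk ?_
    have := ((hα₁ v hv).const_smul (Real.cosh (u' * s))).add
      ((hα₂ v hv).const_smul (Real.sinh (u' * s)))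
    convert this using 1
    · rfl
    module
  have hdφv : ∀ u' : ℝ, deriv (fun v' => φ u' v') v
      = ((0 : ℝ), (Real.cosh (u' * s) * a₁ v + Real.sinh (u' * s) * a₂ v) • α₃ v) :=
    fun u' => (hφv u').deriv
  refine ⟨?_, ?_, ?_, ?_, ?_, ?_⟩
  · -- (i)
    rw [hψ, minkB_ex2, h11, h22, h12, minkB_comm (α₂ v) (α₁ v), h12]
    have := hpyth (u * s)
    nlinarith [this]
  · -- (ii)
    have hfun : (fun u' => deriv (fun u'' => φ u'' v) u')
        = fun u' => ((c0 : ℝ), (s * Real.sinh (u' * s)) • α₁ v + (s * Real.cosh (u' * s)) • α₂ v) :=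
      funext fun u' => (hφu u').deriv
    rw [hfun]
    have hd : HasDerivAt (fun u' => ((c0 : ℝ),
        (s * Real.sinh (u' * s)) • α₁ v + (s * Real.cosh (u' * s)) • α₂ v))
        ((0 : ℝ), (s * (s * Real.cosh (u * s))) • α₁ v + (s * (s * Real.sinh (u * s))) • α₂ v) u := by
      refine (hasDerivAt_const u c0).prodMk ?_
      exact ((((hsi u).const_mul s)).smul_const (α₁ v)).add
        ((((hco u).const_mul s)).smul_const (α₂ v))
    rw [hd.deriv]
    rw [hψ]
    apply Prod.ext
    · simp
    · show (s * (s * Real.cosh (u * s))) • α₁ v + (s * (s * Real.sinh (u * s))) • α₂ v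
        = s ^ 2 • (Real.cosh (u * s) • α₁ v + Real.sinh (u * s) • α₂ v)
      module
  · -- (iii) mixed
    refine ⟨s * Real.sinh (u * s) * a₁ v + s * Real.cosh (u * s) * a₂ v, ?_⟩
    have hfun : (fun u' => deriv (fun v' => φ u' v') v)
        = fun u' => (((0 : ℝ), (Real.cosh (u' * s) * a₁ v + Real.sinh (u' * s) * a₂ v) • α₃ v)
          : ℝ × EuclideanSpace ℝ (Fin 4)) :=
      funext fun u' => hdφv u'
    rw [hfun]
    have hd : HasDerivAt (fun u' => (((0 : ℝ),
        (Real.cosh (u' * s) * a₁ v + Real.sinh (u' * s) * a₂ v) • α₃ v)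
          : ℝ × EuclideanSpace ℝ (Fin 4)))
        ((0 : ℝ), (s * Real.sinh (u * s) * a₁ v + s * Real.cosh (u * s) * a₂ v) • α₃ v) u := by
      refine (hasDerivAt_const u (0 : ℝ)).prodMk ?_
      exact (((hco u).mul_const (a₁ v)).add ((hsi u).mul_const (a₂ v))).smul_const (α₃ v)
    rw [hd.deriv]
    apply Prod.ext <;> simp
  · -- (iii) ∂v
    exact ⟨Real.cosh (u * s) * a₁ v + Real.sinh (u * s) * a₂ v,
      by rw [hdφv u]; apply Prod.ext <;> simp⟩
  · -- (iv) g(∂uφ,∂uφ) = -1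
    rw [hdφu]
    show -(c0 * c0) + minkB _ _ = -1
    rw [minkB_ex2, h11, h22, h12, minkB_comm (α₂ v) (α₁ v), h12]
    nlinarith [hpyth (u * s), hpyth θ₀]
  · -- (iv) g(∂uφ,∂vφ) = 0
    rw [hdφu, hdφv u]
    show -(c0 * 0) + minkB _ _ = 0
    rw [minkB_ex1, h13, h23]
    ring
end
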